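/- Let 𝔛 = (ℚ, τ) be the neighborhood frame on the rational numbers where τ(x) is the punctured neighborhood filter of x in the standard (order) topology on ℚ, i.e., τ(x) = {U : there is an open V containing x with V \ {x} ⊆ U}. Then the bimodal logic of the product 2-frame 𝔛 × 𝔛 equals the fusion D4 ⊗ D4. -/

import Mathlib

set_option autoImplicit false

/-- Modal formulas with `n` modalities (propositional letters indexed by `ℕ`). -/
inductive MFormula (n : ℕ) : Type
  | prop : ℕ → MFormula n
  | bot  : MFormula n
  | imp  : MFormula n → MFormula n → MFormula n
  | box  : Fin n → MFormula n → MFormula n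

namespace MFormula

/-- Negation as an abbreviation: ¬φ := φ → ⊥. -/
def neg {n : ℕ} (φ : MFormula n) : MFormula n := φ.imp .bot

/-- Uniform substitution of formulas for propositional letters. -/
def subst {n : ℕ} (s : ℕ → MFormula n) : MFormula n → MFormula n
  | prop p  => s p
  | bot     => bot
  | imp φ ψ => imp (φ.subst s) (ψ.subst s)
  | box i φ => box i (φ.subst s)

end MFormula

/-- A classical tautology: true under every boolean valuation of formulas
(a valuation respecting `⊥` and `→`, arbitrary on letters and boxed formulas). -/
def IsTautology {n : ℕ} (φ : MFormula n) : Prop :=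
  ∀ v : MFormula n → Prop,
    ¬ v .bot → (∀ ψ χ : MFormula n, v (ψ.imp χ) ↔ (v ψ → v χ)) → v φ

/-- Normal modal logics with `n` modalities. -/
structure IsNormalLogic {n : ℕ} (L : Set (MFormula n)) : Prop where
  taut : ∀ φ : MFormula n, IsTautology φ → φ ∈ L
  kax : ∀ (i : Fin n) (p q : MFormula n),
    ((MFormula.box i (p.imp q)).imp ((MFormula.box i p).imp (MFormula.box i q))) ∈ L
  mp : ∀ φ ψ : MFormula n, φ.imp ψ ∈ L → φ ∈ L → ψ ∈ L
  subst : ∀ (φ : MFormula n) (s : ℕ → MFormula n), φ ∈ L → φ.subst s ∈ L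
  nec : ∀ (i : Fin n) (φ : MFormula n), φ ∈ L → MFormula.box i φ ∈ L

/-- The smallest normal logic containing `Γ`. -/
def NormalClosure {n : ℕ} (Γ : Set (MFormula n)) : Set (MFormula n) :=
  ⋂₀ {L : Set (MFormula n) | IsNormalLogic L ∧ Γ ⊆ L}

/-- The axiom □p → ¬□¬p. -/
def dAx : MFormula 1 :=
  (MFormula.box 0 (.prop 0)).imp (MFormula.neg (MFormula.box 0 (MFormula.neg (.prop 0))))

/-- The axiom □p → p. -/
def tAx : MFormula 1 := (MFormula.box 0 (.prop 0)).imp (.prop 0)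

/-- The axiom □p → □□p. -/
def fourAx : MFormula 1 :=
  (MFormula.box 0 (.prop 0)).imp (MFormula.box 0 (MFormula.box 0 (.prop 0)))

def LogicK : Set (MFormula 1) := NormalClosure ∅
def LogicD : Set (MFormula 1) := NormalClosure (LogicK ∪ {dAx})
def LogicT : Set (MFormula 1) := NormalClosure (LogicK ∪ {tAx})
def LogicD4 : Set (MFormula 1) := NormalClosure (LogicD ∪ {fourAx})
def LogicS4 : Set (MFormula 1) := NormalClosure (LogicT ∪ {fourAx})

/-- Translation of a unimodal formula into the bimodal language, replacing □ by □_i. -/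
def trTo (i : Fin 2) : MFormula 1 → MFormula 2
  | .prop p  => .prop p
  | .bot     => .bot
  | .imp φ ψ => .imp (trTo i φ) (trTo i ψ)
  | .box _ φ => .box i (trTo i φ)

/-- The fusion `L₁ ⊗ L₂` of two unimodal logics: the smallest bimodal normal logic
containing the translation of `L₁` (□ ↦ □₁) and of `L₂` (□ ↦ □₂). -/
def Fusion (L₁ L₂ : Set (MFormula 1)) : Set (MFormula 2) :=
  NormalClosure (trTo 0 '' L₁ ∪ trTo 1 '' L₂)

/-- Truth in a Kripke model. -/
def kSat {n : ℕ} {W : Type} (R : Fin n → W → W → Prop) (V : ℕ → Set W) :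
    W → MFormula n → Prop
  | w, .prop p  => w ∈ V p
  | _, .bot     => False
  | w, .imp φ ψ => kSat R V w φ → kSat R V w ψ
  | w, .box i φ => ∀ v : W, R i w v → kSat R V v φ

/-- The logic of a Kripke `n`-frame. -/
def KLogn {n : ℕ} {W : Type} [Nonempty W] (R : Fin n → W → W → Prop) :
    Set (MFormula n) :=
  {φ | ∀ (V : ℕ → Set W) (w : W), kSat R V w φ}

/-- The logic of a unimodal Kripke frame. -/
def KLog {W : Type} [Nonempty W] (R : W → W → Prop) : Set (MFormula 1) :=
  KLogn (fun _ => R)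

/-- The logic of a bimodal Kripke frame. -/
def KLog2 {W : Type} [Nonempty W] (R₁ R₂ : W → W → Prop) : Set (MFormula 2) :=
  KLogn ![R₁, R₂]

/-- Truth in a (monotone) neighborhood model: `x ⊨ □_i φ` iff the truth set of `φ`
belongs to the filter `τ i x`. -/
def nSat {n : ℕ} {X : Type} (τ : Fin n → X → Filter X) (V : ℕ → Set X) :
    X → MFormula n → Prop
  | x, .prop p  => x ∈ V p
  | _, .bot     => False
  | x, .imp φ ψ => nSat τ V x φ → nSat τ V x ψ
  | x, .box i φ => {y | nSat τ V y φ} ∈ τ i x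

/-- The logic of a neighborhood `n`-frame. -/
def NLogn {n : ℕ} {X : Type} [Nonempty X] (τ : Fin n → X → Filter X) :
    Set (MFormula n) :=
  {φ | ∀ (V : ℕ → Set X) (x : X), nSat τ V x φ}

/-- The logic of a unimodal neighborhood frame. -/
def NLog {X : Type} [Nonempty X] (τ : X → Filter X) : Set (MFormula 1) :=
  NLogn (fun _ => τ)

/-- The logic of a neighborhood 2-frame. -/
def NLog2 {X : Type} [Nonempty X] (τ₁ τ₂ : X → Filter X) : Set (MFormula 2) :=
  NLogn ![τ₁, τ₂]

/-- Validity of a unimodal formula in a neighborhood frame. -/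
def NValid {X : Type} (τ : X → Filter X) (φ : MFormula 1) : Prop :=
  ∀ (V : ℕ → Set X) (x : X), nSat (fun _ => τ) V x φ

/-- The neighborhood frame `N(F)` of a Kripke frame `F = (W, R)`:
`τ(w)` is the principal filter of `R(w)`. -/
def nOfK {W : Type} (R : W → W → Prop) (w : W) : Filter W :=
  Filter.principal {v | R w v}

/-- Bounded morphisms between neighborhood frames (with neighborhood functions
indexed by `ι`). -/
def IsNdMorphism {ι X Y : Type} (τ : ι → X → Filter X) (σ : ι → Y → Filter Y)
    (f : X → Y) : Prop :=
  Function.Surjective f ∧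
    ∀ (i : ι) (x : X),
      (∀ U ∈ τ i x, f '' U ∈ σ i (f x)) ∧
      (∀ V ∈ σ i (f x), ∃ U ∈ τ i x, f '' U ⊆ V)

/-- First neighborhood function of the product of two neighborhood frames:
`U ∈ τ'_1(x₁,x₂)` iff `∃ V ∈ τ₁ x₁, V × {x₂} ⊆ U`. -/
def prodTau1 {X₁ X₂ : Type} (τ₁ : X₁ → Filter X₁) (p : X₁ × X₂) :
    Filter (X₁ × X₂) :=
  (τ₁ p.1).map (fun x => (x, p.2))

/-- Second neighborhood function of the product of two neighborhood frames:
`U ∈ τ'_2(x₁,x₂)` iff `∃ V ∈ τ₂ x₂, {x₁} × V ⊆ U`. -/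
def prodTau2 {X₁ X₂ : Type} (τ₂ : X₂ → Filter X₂) (p : X₁ × X₂) :
    Filter (X₁ × X₂) :=
  (τ₂ p.2).map (fun y => (p.1, y))

/-- The successor relation on finite sequences: `a R b` iff `b = a·x` for some `x ∈ A`. -/
def sucRel (A : Type) (a b : List A) : Prop := ∃ x : A, b = a ++ [x]

/-- The four kinds of tree frames: irreflexive/reflexive, non-transitive/transitive. -/
inductive TreeKind : Type
  | inn  -- irreflexive non-transitive: F_in
  | rn   -- reflexive non-transitive: F_rn (reflexive closure)
  | itr  -- irreflexive transitive: F_it (transitive closure)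
  | rt   -- reflexive transitive: F_rt (reflexive-transitive closure)

/-- The relation of the tree frame `F_{ξη}[A]` on `A*`. -/
def treeRel (A : Type) : TreeKind → List A → List A → Prop
  | .inn => sucRel A
  | .rn  => fun a b => a = b ∨ sucRel A a b
  | .itr => Relation.TransGen (sucRel A)
  | .rt  => Relation.ReflTransGen (sucRel A)

/-- First relation of the product frame `F₁ ⊗ F₂` on `(A ⊔ B)*`:
`x R'_1 y` iff `y = x·z` for some `z ∈ A*` with `Λ R₁ z`. -/
def prodRel1 (A B : Type) (k : TreeKind) (x y : List (A ⊕ B)) : Prop :=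
  ∃ z : List A, treeRel A k [] z ∧ y = x ++ z.map Sum.inl

/-- Second relation of the product frame `F₁ ⊗ F₂` on `(A ⊔ B)*`. -/
def prodRel2 (A B : Type) (k : TreeKind) (x y : List (A ⊕ B)) : Prop :=
  ∃ z : List B, treeRel B k [] z ∧ y = x ++ z.map Sum.inr

/-- Pseudo-infinite sequences over `A ∪ {0}` (with `0` modelled by `none`, so
automatically `0 ∉ A`) that are eventually `0`. -/
def PSeq (A : Type) : Type :=
  {α : ℕ → Option A // ∃ N, ∀ k ≥ N, α k = none}

instance {A : Type} : Nonempty (PSeq A) := ⟨⟨fun _ => none, 0, fun _ _ => rfl⟩⟩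

/-- `st(α)`: the least `N` such that `α` has only zeros from position `N` on. -/
noncomputable def PSeq.st {A : Type} (α : PSeq A) : ℕ :=
  sInf {N | ∀ k ≥ N, α.1 k = none}

/-- `f_F(α)`: the finite sequence obtained from `α` by deleting all zeros. -/
noncomputable def PSeq.forget {A : Type} (α : PSeq A) : List A :=
  ((List.range α.st).map α.1).reduceOption

/-- The basic neighborhood `U_k(α)` of `α`, relative to the relation `R` on `A*`:
`{β ∈ X : α|_m = β|_m and f_F(α) R f_F(β)}` where `m = max(k, st(α))`. -/
def Unbhd {A : Type} (R : List A → List A → Prop) (k : ℕ) (α : PSeq A) :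
    Set (PSeq A) :=
  {β | (∀ i < max k α.st, α.1 i = β.1 i) ∧ R α.forget β.forget}

/-- The neighborhood function of `N_ω(F)`: `τ(α)` is the filter generated by the
base `{U_k(α) : k ∈ ℕ}`. -/
noncomputable def nOmega {A : Type} (R : List A → List A → Prop) (α : PSeq A) :
    Filter (PSeq A) :=
  ⨅ k : ℕ, Filter.principal (Unbhd R k α)

/-- The interleaving `x₁ y₁ x₂ y₂ …` of two pseudo-infinite sequences. -/
def interleave {A B : Type} (α : PSeq A) (β : PSeq B) : PSeq (A ⊕ B) :=
  ⟨fun n => if n % 2 = 0 then (α.1 (n / 2)).map Sum.inl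
            else (β.1 (n / 2)).map Sum.inr, by
    obtain ⟨N₁, h₁⟩ := α.2
    obtain ⟨N₂, h₂⟩ := β.2
    refine ⟨2 * max N₁ N₂, fun k hk => ?_⟩
    have hdiv : max N₁ N₂ ≤ k / 2 := by omega
    by_cases h : k % 2 = 0
    · simp [h, h₁ (k / 2) (le_trans (le_max_left _ _) hdiv)]
    · simp [h, h₂ (k / 2) (le_trans (le_max_right _ _) hdiv)]⟩

/-- The map `g`: delete all zeros from the interleaving of `α` and `β`. -/
noncomputable def gMap {A B : Type} (p : PSeq A × PSeq B) : List (A ⊕ B) :=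
  (interleave p.1 p.2).forget

/-!
Soundness: the punctured-neighbourhood frame of a `T₁` space without isolated points validates
`D4`, and each modality of the product only moves one coordinate, so the fusion is valid.

Completeness: a non-theorem of `D4 ⊗ D4` is refuted at the root of an unravelling of the
canonical model along the product of two transitive trees over an infinite alphabet. By Cantor's
theorem `ℚ` is order isomorphic to the lexicographically ordered finitely supported integer
sequences, in which cylinders form a neighbourhood basis. Deleting the zeros from the
interleaving of two such sequences maps `ℚ × ℚ` onto the tree product, and this is a bounded
morphism onto its neighbourhood frame: a small move of the first coordinate changes its sequence
only beyond the current support, i.e. appends letters of the first kind, and every such extension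
occurs in every punctured neighbourhood.
-/

open MFormula

namespace MFormula

variable {n : ℕ}

def impList : List (MFormula n) → MFormula n → MFormula n
  | [], φ => φ
  | χ :: l, φ => χ.imp (impList l φ)

theorem eval_impList {v : MFormula n → Prop} (hv : ∀ ψ χ, v (ψ.imp χ) ↔ (v ψ → v χ))
    (l : List (MFormula n)) (φ : MFormula n) :
    v (impList l φ) ↔ ((∀ χ ∈ l, v χ) → v φ) := by
  induction l with
  | nil => simp [impList]
  | cons χ l ih => simp [impList, hv, ih]

private def encode : MFormula n → ℕ
  | prop p => Nat.pair 0 p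
  | bot => Nat.pair 1 0
  | imp φ ψ => Nat.pair 2 (Nat.pair (encode φ) (encode ψ))
  | box i φ => Nat.pair 3 (Nat.pair i (encode φ))

private theorem encode_injective : Function.Injective (encode : MFormula n → ℕ) := by
  intro φ
  induction φ with
  | prop p => intro ψ h; cases ψ <;> simp_all [encode, Nat.pair_eq_pair]
  | bot => intro ψ h; cases ψ <;> simp_all [encode, Nat.pair_eq_pair]
  | imp φ₁ φ₂ ih₁ ih₂ =>
    intro ψ h; cases ψ <;> simp only [encode, Nat.pair_eq_pair] at h <;> try omega
    rw [ih₁ h.2.1, ih₂ h.2.2]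
  | box i φ ih =>
    intro ψ h; cases ψ <;> simp only [encode, Nat.pair_eq_pair] at h <;> try omega
    rw [ih h.2.2, Fin.ext h.2.1]

instance : Countable (MFormula n) := encode_injective.countable

instance : Inhabited (MFormula n) := ⟨bot⟩

end MFormula

namespace IsNormalLogic

variable {n : ℕ} {L : Set (MFormula n)}

theorem mem_of_taut_imp (hL : IsNormalLogic L) {A C : MFormula n} (hA : A ∈ L)
    (h : ∀ v : MFormula n → Prop, ¬ v .bot → (∀ ψ χ, v (ψ.imp χ) ↔ (v ψ → v χ)) → v A → v C) :
    C ∈ L :=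
  hL.mp _ _ (hL.taut _ fun v hb hv => (hv _ _).2 (h v hb hv)) hA

theorem mem_of_taut_imp₂ (hL : IsNormalLogic L) {A B C : MFormula n} (hA : A ∈ L) (hB : B ∈ L)
    (h : ∀ v : MFormula n → Prop, ¬ v .bot → (∀ ψ χ, v (ψ.imp χ) ↔ (v ψ → v χ)) →
      v A → v B → v C) :
    C ∈ L :=
  hL.mp _ _ (hL.mem_of_taut_imp hA fun v hb hv hA => (hv _ _).2 (h v hb hv hA)) hB

theorem box_impList_mem (hL : IsNormalLogic L) (i : Fin n) (l : List (MFormula n))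
    (φ : MFormula n) :
    (box i (impList l φ)).imp (impList (l.map (box i)) (box i φ)) ∈ L := by
  induction l with
  | nil => exact hL.taut _ fun v _ hv => (hv _ _).2 id
  | cons χ l ih =>
    refine hL.mem_of_taut_imp₂ (hL.kax i χ (impList l φ)) ih fun v _ hv => ?_
    simp only [impList, List.map_cons, hv]
    tauto

end IsNormalLogic

theorem isNormalLogic_normalClosure {n : ℕ} (Γ : Set (MFormula n)) :
    IsNormalLogic (NormalClosure Γ) where
  taut φ h _ hL := hL.1.taut φ h
  kax i p q _ hL := hL.1.kax i p q
  mp φ ψ h₁ h₂ L hL := hL.1.mp φ ψ (h₁ L hL) (h₂ L hL)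
  subst φ s h L hL := hL.1.subst φ s (h L hL)
  nec i φ h L hL := hL.1.nec i φ (h L hL)

theorem subset_normalClosure {n : ℕ} (Γ : Set (MFormula n)) : Γ ⊆ NormalClosure Γ :=
  fun _ hφ _ hL => hL.2 hφ

theorem normalClosure_subset {n : ℕ} {Γ L : Set (MFormula n)} (hL : IsNormalLogic L)
    (hΓ : Γ ⊆ L) : NormalClosure Γ ⊆ L :=
  fun _ hφ => hφ L ⟨hL, hΓ⟩

section Canonical

variable {n : ℕ} {L : Set (MFormula n)}

def Derivable (L S : Set (MFormula n)) (φ : MFormula n) : Prop :=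
  ∃ l : List (MFormula n), (∀ χ ∈ l, χ ∈ S) ∧ impList l φ ∈ L

def Consistent (L S : Set (MFormula n)) : Prop := ¬ Derivable L S .bot

structure IsMaxConsistent (L w : Set (MFormula n)) : Prop where
  consistent : Consistent L w
  maximal : ∀ φ ∉ w, ¬ Consistent L (insert φ w)

namespace Derivable

variable {S : Set (MFormula n)}

theorem of_mem_logic {φ : MFormula n} (h : φ ∈ L) : Derivable L S φ := ⟨[], by simp, h⟩

theorem of_mem (hL : IsNormalLogic L) {φ : MFormula n} (h : φ ∈ S) : Derivable L S φ :=
  ⟨[φ], by simp [h], hL.taut _ fun v _ hv => by simp [eval_impList hv]⟩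

theorem mp (hL : IsNormalLogic L) {φ ψ : MFormula n} (h₁ : Derivable L S (φ.imp ψ))
    (h₂ : Derivable L S φ) : Derivable L S ψ := by
  obtain ⟨l₁, hl₁, hp₁⟩ := h₁
  obtain ⟨l₂, hl₂, hp₂⟩ := h₂
  refine ⟨l₁ ++ l₂, by simpa [or_imp, forall_and] using And.intro hl₁ hl₂, ?_⟩
  refine hL.mem_of_taut_imp₂ hp₁ hp₂ fun v _ hv h₁ h₂ => ?_
  simp only [eval_impList hv, hv, List.mem_append] at *
  exact fun h => h₁ (fun χ hχ => h χ (.inl hχ)) (h₂ fun χ hχ => h χ (.inr hχ))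

theorem deduction (hL : IsNormalLogic L) {φ ψ : MFormula n}
    (h : Derivable L (insert ψ S) φ) : Derivable L S (ψ.imp φ) := by
  classical
  obtain ⟨l, hl, hp⟩ := h
  refine ⟨l.filter (· ≠ ψ), fun χ hχ => ?_, hL.mem_of_taut_imp hp fun v _ hv h => ?_⟩
  · simp only [List.mem_filter, decide_eq_true_eq] at hχ
    exact (hl χ hχ.1).resolve_left hχ.2
  · simp only [eval_impList hv, hv, List.mem_filter, decide_eq_true_eq] at *
    exact fun hl' hψ => h fun χ hχ => if e : χ = ψ then e ▸ hψ else hl' χ ⟨hχ, e⟩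

end Derivable

theorem exists_isMaxConsistent_superset {S : Set (MFormula n)} (h : Consistent L S) :
    ∃ w, S ⊆ w ∧ IsMaxConsistent L w := by
  have chain : ∀ c ⊆ {T | Consistent L T}, IsChain (· ⊆ ·) c → c.Nonempty →
      ∃ ub ∈ {T | Consistent L T}, ∀ s ∈ c, s ⊆ ub := by
    classical
    intro c hc hchain hne
    refine ⟨⋃₀ c, ?_, fun s hs => Set.subset_sUnion_of_mem hs⟩
    rintro ⟨l, hl, hp⟩
    -- the finitely many premises all lie in a single member of the chain
    obtain ⟨t, htc, hlt⟩ := hchain.directedOn.exists_mem_subset_of_finset_subset_biUnion hne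
      (s := l.toFinset) (fun χ hχ => by simpa using hl χ (List.mem_toFinset.1 hχ))
    exact hc htc ⟨l, fun χ hχ => hlt (by simpa using hχ), hp⟩
  obtain ⟨w, hSw, hmax⟩ := zorn_subset_nonempty {T | Consistent L T} chain S h
  exact ⟨w, hSw, hmax.prop, fun φ hφ hcon => hφ (hmax.eq_of_subset hcon
    (Set.subset_insert _ _) ▸ Set.mem_insert φ w)⟩

def CanonicalRel (i : Fin n) (w v : Set (MFormula n)) : Prop := ∀ φ, box i φ ∈ w → φ ∈ v

theorem consistent_singleton_neg (hL : IsNormalLogic L) {φ : MFormula n} (hφ : φ ∉ L) :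
    Consistent L {φ.neg} := by
  rintro ⟨l, hl, hp⟩
  refine hφ (hL.mem_of_taut_imp hp fun v hb hv h => ?_)
  by_contra hφ'
  exact hb ((eval_impList hv l _).1 h fun χ hχ => (hl χ hχ) ▸ (hv _ _).2 fun h' => absurd h' hφ')

namespace IsMaxConsistent

variable {w : Set (MFormula n)} (hL : IsNormalLogic L) (hw : IsMaxConsistent L w)
include hL hw

theorem mem_of_derivable {φ : MFormula n} (h : Derivable L w φ) : φ ∈ w := by
  by_contra hφ
  have hinc := not_not.1 (hw.maximal φ hφ)
  exact hw.consistent ((hinc.deduction hL).mp hL h)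

theorem bot_notMem : (bot : MFormula n) ∉ w := fun h => hw.consistent (.of_mem hL h)

theorem imp_mem_iff {φ ψ : MFormula n} : φ.imp ψ ∈ w ↔ (φ ∈ w → ψ ∈ w) := by
  refine ⟨fun h hφ => hw.mem_of_derivable hL ((Derivable.of_mem hL h).mp hL (.of_mem hL hφ)),
    fun h => hw.mem_of_derivable hL ?_⟩
  by_cases hφ : φ ∈ w
  · exact (Derivable.of_mem_logic (hL.taut (ψ.imp (φ.imp ψ)) fun v _ hv => by
      simp only [hv]; exact fun h _ => h)).mp hL (.of_mem hL (h hφ))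
  · have hneg := (not_not.1 (hw.maximal φ hφ)).deduction hL
    exact (Derivable.of_mem_logic (hL.taut ((φ.imp bot).imp (φ.imp ψ)) fun v hb hv => by
      simp only [hv]; exact fun h h' => absurd (h h') hb)).mp hL hneg

theorem box_mem_of_impList_mem {i : Fin n} {l : List (MFormula n)} {φ : MFormula n}
    (hp : impList l φ ∈ L) (hl : ∀ χ ∈ l, box i χ ∈ w) : box i φ ∈ w :=
  hw.mem_of_derivable hL ⟨l.map (box i), by simpa using hl,
    hL.mp _ _ (hL.box_impList_mem i l φ) (hL.nec i _ hp)⟩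

theorem exists_canonicalRel_notMem {i : Fin n} {ψ : MFormula n} (h : box i ψ ∉ w) :
    ∃ v : {v // IsMaxConsistent L v}, CanonicalRel i w v.1 ∧ ψ ∉ v.1 := by
  have hcon : Consistent L (insert ψ.neg {φ | box i φ ∈ w}) := by
    intro hder
    obtain ⟨l, hl, hp⟩ := hder.deduction hL
    refine h (hw.box_mem_of_impList_mem hL (hL.mem_of_taut_imp hp fun v hb hv h' => ?_) hl)
    simp only [eval_impList hv, neg, hv] at h' ⊢
    exact fun hl' => by_contra fun hψ => hb (h' hl' fun h => absurd h hψ)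
  obtain ⟨v, hsub, hv⟩ := exists_isMaxConsistent_superset hcon
  refine ⟨⟨v, hv⟩, fun φ hφ => hsub (Set.mem_insert_of_mem _ hφ), fun hψ => ?_⟩
  exact hv.bot_notMem hL ((hv.imp_mem_iff hL).1 (hsub (Set.mem_insert _ _)) hψ)

theorem exists_canonicalRel {i : Fin n} (hD : (box i bot).neg ∈ L) (ψ : MFormula n) :
    ∃ v : {v // IsMaxConsistent L v}, CanonicalRel i w v.1 ∧ (box i ψ ∉ w → ψ ∉ v.1) := by
  by_cases h : box i ψ ∈ w
  · -- by `D`, `□⊥ ∉ w`, so `w` has some canonical successor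
    have hbot : box i bot ∉ w := fun hb => hw.bot_notMem hL
      ((hw.imp_mem_iff hL).1 (hw.mem_of_derivable hL (.of_mem_logic hD)) hb)
    obtain ⟨v, hv, -⟩ := hw.exists_canonicalRel_notMem hL hbot
    exact ⟨v, hv, absurd h⟩
  · obtain ⟨v, hv, hψ⟩ := hw.exists_canonicalRel_notMem hL h
    exact ⟨v, hv, fun _ => hψ⟩

end IsMaxConsistent

theorem CanonicalRel.trans (hL : IsNormalLogic L) {i : Fin n}
    (h4 : ∀ ψ, (box i ψ).imp (box i (box i ψ)) ∈ L) {w v u : Set (MFormula n)}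
    (hw : IsMaxConsistent L w) (h₁ : CanonicalRel i w v) (h₂ : CanonicalRel i v u) :
    CanonicalRel i w u :=
  fun φ hφ => h₂ φ (h₁ _
    ((hw.imp_mem_iff hL).1 (hw.mem_of_derivable hL (.of_mem_logic (h4 φ))) hφ))

theorem kSat_iff_mem_of_labelling (hL : IsNormalLogic L) {W : Type} {R : Fin n → W → W → Prop}
    (lab : W → Set (MFormula n)) (hlab : ∀ x, IsMaxConsistent L (lab x))
    (hR : ∀ i x y, R i x y → CanonicalRel i (lab x) (lab y))
    (hsucc : ∀ i x φ, box i φ ∉ lab x → ∃ y, R i x y ∧ φ ∉ lab y) (φ : MFormula n) (x : W) :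
    kSat R (fun p => {x | prop p ∈ lab x}) x φ ↔ φ ∈ lab x := by
  induction φ generalizing x with
  | prop p => rfl
  | bot => exact iff_of_false id ((hlab x).bot_notMem hL)
  | imp φ ψ ihφ ihψ => simp only [kSat, ihφ, ihψ, (hlab x).imp_mem_iff hL]
  | box i φ ih =>
    refine ⟨fun h => by_contra fun hφ => ?_, fun h y hxy => (ih y).2 (hR i x y hxy φ h)⟩
    obtain ⟨y, hxy, hy⟩ := hsucc i x φ hφ
    exact hy ((ih y).1 (h y hxy))

end Canonical

section Tree

variable {A : Type}

theorem transGen_sucRel_nil_iff {z : List A} : Relation.TransGen (sucRel A) [] z ↔ z ≠ [] := by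
  refine ⟨fun h => ?_, fun hz => ?_⟩
  · cases h with
    | single h => obtain ⟨a, rfl⟩ := h; simp
    | tail _ h => obtain ⟨a, rfl⟩ := h; simp
  · induction z using List.reverseRecOn with
    | nil => exact absurd rfl hz
    | append_singleton z a ih =>
      rcases eq_or_ne z [] with rfl | h
      · exact .single ⟨a, rfl⟩
      · exact .tail (ih h) ⟨a, rfl⟩

theorem treeProdRel_iff {i : Fin 2} {x y : List (A ⊕ A)} :
    (![prodRel1 A A .itr, prodRel2 A A .itr] : Fin 2 → _) i x y ↔
      ∃ z, Relation.TransGen (sucRel A) [] z ∧ y = x ++ z.map (![Sum.inl, Sum.inr] i) := by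
  fin_cases i <;> rfl

variable {L : Set (MFormula 2)} (hL : IsNormalLogic L) (hD : ∀ i, (box i bot).neg ∈ L)
  (h4 : ∀ i ψ, (box i ψ).imp (box i (box i ψ)) ∈ L)
include hL hD h4

theorem exists_treeProd_labelling {en : A → MFormula 2} (hen : Function.Surjective en)
    {root : Set (MFormula 2)} (hroot : IsMaxConsistent L root) :
    ∃ lab : List (A ⊕ A) → Set (MFormula 2), lab [] = root ∧
      (∀ x, IsMaxConsistent L (lab x)) ∧
      (∀ i x y, (![prodRel1 A A .itr, prodRel2 A A .itr] : Fin 2 → _) i x y →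
        CanonicalRel i (lab x) (lab y)) ∧
      (∀ i x φ, box i φ ∉ lab x →
        ∃ y, (![prodRel1 A A .itr, prodRel2 A A .itr] : Fin 2 → _) i x y ∧ φ ∉ lab y) := by
  choose succ hsucc using fun i ψ (w : {w // IsMaxConsistent L w}) =>
    w.2.exists_canonicalRel hL (hD i) ψ
  -- the letter `inl a` (resp. `inr a`) leads to a `□₁`- (resp. `□₂`-) successor that refutes
  -- `en a` whenever possible
  let step (w : {w // IsMaxConsistent L w}) : A ⊕ A → {w // IsMaxConsistent L w} :=
    Sum.elim (fun a => succ 0 (en a) w) (fun a => succ 1 (en a) w)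
  let lab (x : List (A ⊕ A)) := x.foldl step ⟨root, hroot⟩
  have lab_snoc (x : List (A ⊕ A)) (i : Fin 2) (a : A) :
      lab (x ++ [![Sum.inl, Sum.inr] i a]) = succ i (en a) (lab x) := by
    fin_cases i <;> simp [lab, step, List.foldl_append]
  refine ⟨fun x => (lab x).1, rfl, fun x => (lab x).2, ?_, fun i x φ hφ => ?_⟩
  · intro i x y hxy
    obtain ⟨z, hz, rfl⟩ := treeProdRel_iff.1 hxy
    clear hxy
    induction hz with
    | single h =>
      obtain ⟨a, rfl⟩ := h
      dsimp only
      rw [List.nil_append, List.map_singleton, lab_snoc]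
      exact (hsucc i (en a) (lab x)).1
    | tail _ h ih =>
      obtain ⟨a, rfl⟩ := h
      dsimp only at ih ⊢
      rw [List.map_append, ← List.append_assoc, List.map_singleton, lab_snoc]
      exact ih.trans hL (h4 i) (lab x).2 (hsucc i (en a) _).1
  · obtain ⟨a, rfl⟩ := hen φ
    refine ⟨x ++ [![Sum.inl, Sum.inr] i a], treeProdRel_iff.2 ⟨[a], .single ⟨a, rfl⟩, rfl⟩, ?_⟩
    dsimp only at hφ ⊢
    rw [lab_snoc]
    exact (hsucc i (en a) (lab x)).2 hφ

theorem kLog2_treeProd_subset [Infinite A] :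
    KLog2 (prodRel1 A A .itr) (prodRel2 A A .itr) ⊆ L := by
  intro φ hφ
  by_contra hφL
  obtain ⟨s, hs⟩ := exists_surjective_nat (MFormula 2)
  have hen : Function.Surjective (s ∘ Function.invFun (Infinite.natEmbedding A)) :=
    hs.comp (Function.invFun_surjective (Infinite.natEmbedding A).injective)
  obtain ⟨root, hsub, hroot⟩ := exists_isMaxConsistent_superset (consistent_singleton_neg hL hφL)
  obtain ⟨lab, rfl, hlab, hR, hsucc⟩ := exists_treeProd_labelling hL hD h4 hen hroot
  have hφroot := (kSat_iff_mem_of_labelling hL lab hlab hR hsucc φ []).1 (hφ _ [])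
  exact (hlab []).bot_notMem hL (((hlab []).imp_mem_iff hL).1 (hsub rfl) hφroot)

end Tree

theorem dAx_mem_logicD4 : dAx ∈ LogicD4 :=
  subset_normalClosure _ (.inl (subset_normalClosure _ (.inr rfl)))

theorem fourAx_mem_logicD4 : fourAx ∈ LogicD4 := subset_normalClosure _ (.inr rfl)

theorem trTo_mem_fusion {L₁ L₂ : Set (MFormula 1)} {φ : MFormula 1} (h₁ : φ ∈ L₁) (h₂ : φ ∈ L₂)
    (i : Fin 2) : trTo i φ ∈ Fusion L₁ L₂ := by
  fin_cases i
  exacts [subset_normalClosure _ (.inl ⟨φ, h₁, rfl⟩), subset_normalClosure _ (.inr ⟨φ, h₂, rfl⟩)]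

theorem kLog2_treeProd_subset_fusion_D4 (A : Type) [Infinite A] :
    KLog2 (prodRel1 A A .itr) (prodRel2 A A .itr) ⊆ Fusion LogicD4 LogicD4 := by
  have hL := isNormalLogic_normalClosure (trTo 0 '' LogicD4 ∪ trTo 1 '' LogicD4)
  refine kLog2_treeProd_subset hL (fun i => ?_) (fun i ψ => ?_)
  · -- `□⊥ → ¬□¬⊥` is an instance of `D`, and `□¬⊥` holds by necessitation
    refine hL.mem_of_taut_imp₂ (hL.subst _ (fun _ => bot) (trTo_mem_fusion dAx_mem_logicD4
      dAx_mem_logicD4 i)) (hL.nec i _ (hL.taut (bot.imp bot) fun v _ hv => (hv _ _).2 id))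
      fun v _ hv => ?_
    simp only [trTo, dAx, MFormula.subst, neg, hv]
    tauto
  · exact hL.subst _ (fun _ => ψ) (trTo_mem_fusion fourAx_mem_logicD4 fourAx_mem_logicD4 i)

section NeighborhoodSemantics

open Filter Topology

variable {n : ℕ} {X : Type}

theorem nSat_subst (τ : Fin n → X → Filter X) (V : ℕ → Set X) (s : ℕ → MFormula n)
    (φ : MFormula n) (x : X) :
    nSat τ V x (φ.subst s) ↔ nSat τ (fun p => {y | nSat τ V y (s p)}) x φ := by
  induction φ generalizing x with
  | prop p => rfl
  | bot => rfl
  | imp φ ψ ihφ ihψ => exact imp_congr (ihφ x) (ihψ x)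
  | box i φ ih => simp only [MFormula.subst, nSat, ih]

theorem isNormalLogic_nLogn [Nonempty X] (τ : Fin n → X → Filter X) :
    IsNormalLogic (NLogn τ) where
  taut _ h V x := h (nSat τ V x) id fun _ _ => Iff.rfl
  kax _ _ _ _ _ h₁ h₂ := mem_of_superset (inter_mem h₁ h₂) fun _ hy => hy.1 hy.2
  mp _ _ h₁ h₂ V x := h₁ V x (h₂ V x)
  subst φ s h V x := (nSat_subst τ V s φ x).2 (h _ x)
  nec _ _ h V _ := univ_mem' fun y => h V y

theorem nSat_nOfK {W : Type} (R : Fin n → W → W → Prop) (V : ℕ → Set W) (φ : MFormula n)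
    (w : W) : nSat (fun i => nOfK (R i)) V w φ ↔ kSat R V w φ := by
  induction φ generalizing w with
  | prop p => rfl
  | bot => rfl
  | imp φ ψ ihφ ihψ => exact imp_congr (ihφ w) (ihψ w)
  | box i φ ih => simp only [nSat, kSat, nOfK, mem_principal, ← ih]; rfl

theorem nLogn_nOfK {W : Type} [Nonempty W] (R : Fin n → W → W → Prop) :
    NLogn (fun i => nOfK (R i)) = KLogn R := by
  ext φ
  exact forall₂_congr fun V w => nSat_nOfK R V φ w

theorem IsNdMorphism.nSat_preimage_iff {Y : Type} {τ : Fin n → X → Filter X}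
    {σ : Fin n → Y → Filter Y} {f : X → Y} (hf : IsNdMorphism τ σ f) (V : ℕ → Set Y)
    (φ : MFormula n) (x : X) :
    nSat τ (fun p => f ⁻¹' V p) x φ ↔ nSat σ V (f x) φ := by
  induction φ generalizing x with
  | prop p => rfl
  | bot => rfl
  | imp φ ψ ihφ ihψ => exact imp_congr (ihφ x) (ihψ x)
  | box i φ ih =>
    change {y | _} ∈ τ i x ↔ {y | _} ∈ σ i (f x)
    simp only [ih]
    refine ⟨fun h => mem_of_superset ((hf.2 i x).1 _ h) fun _ ⟨_, hy, e⟩ => e ▸ hy,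
      fun h => ?_⟩
    obtain ⟨U, hU, hfU⟩ := (hf.2 i x).2 _ h
    exact mem_of_superset hU (Set.image_subset_iff.1 hfU)

theorem IsNdMorphism.nLogn_subset {Y : Type} [Nonempty X] [Nonempty Y]
    {τ : Fin n → X → Filter X} {σ : Fin n → Y → Filter Y} {f : X → Y}
    (hf : IsNdMorphism τ σ f) : NLogn τ ⊆ NLogn σ := by
  intro φ hφ V y
  obtain ⟨x, rfl⟩ := hf.1 y
  exact (hf.nSat_preimage_iff V φ x).1 (hφ _ x)

section Punctured

variable [TopologicalSpace X]

theorem dAx_mem_nLog_nhdsNE [∀ x : X, NeBot (𝓝[≠] x)] [Nonempty X] :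
    dAx ∈ NLog fun x : X => 𝓝[≠] x := by
  intro V x h₁ h₂
  exact (nonempty_of_mem (inter_mem (f := 𝓝[≠] x) h₁ h₂)).elim fun _ hy => hy.2 hy.1

theorem fourAx_mem_nLog_nhdsNE [T1Space X] [Nonempty X] :
    fourAx ∈ NLog fun x : X => 𝓝[≠] x := by
  intro V x h
  obtain ⟨O, hO, hxO, hOV⟩ := mem_nhdsWithin.1 h
  -- the open set `O \ {x}` is a punctured neighbourhood of each of its points
  refine mem_nhdsWithin.2 ⟨O, hO, hxO, fun y hy => mem_nhdsWithin.2
    ⟨O \ {x}, hO.sdiff isClosed_singleton, hy, fun z hz => hOV hz.1⟩⟩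

theorem logicD4_subset_nLog_nhdsNE [T1Space X] [∀ x : X, NeBot (𝓝[≠] x)] [Nonempty X] :
    LogicD4 ⊆ NLog fun x : X => 𝓝[≠] x := by
  have hN := isNormalLogic_nLogn fun (_ : Fin 1) (x : X) => 𝓝[≠] x
  refine normalClosure_subset hN (Set.union_subset (normalClosure_subset hN
    (Set.union_subset (normalClosure_subset hN (Set.empty_subset _)) ?_)) ?_)
  · exact Set.singleton_subset_iff.2 dAx_mem_nLog_nhdsNE
  · exact Set.singleton_subset_iff.2 fourAx_mem_nLog_nhdsNE

end Punctured

variable {X₁ X₂ : Type} {τ₁ : X₁ → Filter X₁} {τ₂ : X₂ → Filter X₂}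

theorem nSat_trTo_zero (V : ℕ → Set (X₁ × X₂)) (φ : MFormula 1) (x : X₁) (y : X₂) :
    nSat ![prodTau1 τ₁, prodTau2 τ₂] V (x, y) (trTo 0 φ) ↔
      nSat (fun _ => τ₁) (fun p => {a | (a, y) ∈ V p}) x φ := by
  induction φ generalizing x with
  | prop p => rfl
  | bot => rfl
  | imp φ ψ ihφ ihψ => exact imp_congr (ihφ x) (ihψ x)
  | box i φ ih =>
    change {q | _} ∈ (τ₁ x).map _ ↔ {a | _} ∈ τ₁ x
    rw [mem_map]
    exact iff_of_eq (congrArg (· ∈ τ₁ x) (Set.ext ih))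

theorem nSat_trTo_one (V : ℕ → Set (X₁ × X₂)) (φ : MFormula 1) (x : X₁) (y : X₂) :
    nSat ![prodTau1 τ₁, prodTau2 τ₂] V (x, y) (trTo 1 φ) ↔
      nSat (fun _ => τ₂) (fun p => {b | (x, b) ∈ V p}) y φ := by
  induction φ generalizing y with
  | prop p => rfl
  | bot => rfl
  | imp φ ψ ihφ ihψ => exact imp_congr (ihφ y) (ihψ y)
  | box i φ ih =>
    change {q | _} ∈ (τ₂ y).map _ ↔ {b | _} ∈ τ₂ y
    rw [mem_map]
    exact iff_of_eq (congrArg (· ∈ τ₂ y) (Set.ext ih))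

theorem fusion_subset_nLog2 [Nonempty X₁] [Nonempty X₂] {L₁ L₂ : Set (MFormula 1)}
    (h₁ : L₁ ⊆ NLog τ₁) (h₂ : L₂ ⊆ NLog τ₂) :
    Fusion L₁ L₂ ⊆ NLog2 (prodTau1 τ₁) (prodTau2 τ₂) := by
  refine normalClosure_subset (isNormalLogic_nLogn _) (Set.union_subset ?_ ?_)
  · rintro _ ⟨φ, hφ, rfl⟩ V ⟨x, y⟩
    exact (nSat_trTo_zero V φ x y).2 (h₁ hφ _ x)
  · rintro _ ⟨φ, hφ, rfl⟩ V ⟨x, y⟩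
    exact (nSat_trTo_one V φ x y).2 (h₂ hφ _ y)

end NeighborhoodSemantics

section LexCode

open Finsupp Filter Topology

instance : Countable (Lex (ℕ →₀ ℤ)) := inferInstanceAs (Countable (ℕ →₀ ℤ))

theorem Finsupp.Lex.toLex_single_one_pos (m : ℕ) : (0 : Lex (ℕ →₀ ℤ)) < toLex (single m 1) :=
  Finsupp.Lex.lt_iff.2 ⟨m, fun j hj => by simp [hj.ne'], by simp⟩

instance : DenselyOrdered (Lex (ℕ →₀ ℤ)) := by
  refine ⟨fun a b hab => ?_⟩
  obtain ⟨i, hagree, hi⟩ := Finsupp.Lex.lt_iff.1 hab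
  refine ⟨a + toLex (single (i + 1) 1),
    lt_add_of_pos_right a (Finsupp.Lex.toLex_single_one_pos _), Finsupp.Lex.lt_iff.2 ⟨i, ?_, ?_⟩⟩
  · intro j hj
    simp [show i + 1 ≠ j by omega, hagree j hj]
  · simpa [single_apply] using hi

def cylinder (m : ℕ) (α : Lex (ℕ →₀ ℤ)) : Set (Lex (ℕ →₀ ℤ)) :=
  {γ | ∀ i < m, ofLex γ i = ofLex α i}

theorem cylinder_antitone {m m' : ℕ} (h : m ≤ m') (α : Lex (ℕ →₀ ℤ)) :
    cylinder m' α ⊆ cylinder m α :=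
  fun _ hγ i hi => hγ i (hi.trans_le h)

theorem add_single_mem_cylinder (m : ℕ) (α : Lex (ℕ →₀ ℤ)) (z : ℤ) :
    α + toLex (single m z) ∈ cylinder m α :=
  fun i hi => by simp [hi.ne']

theorem cylinder_ordConnected (m : ℕ) (α : Lex (ℕ →₀ ℤ)) : (cylinder m α).OrdConnected := by
  classical
  refine ⟨fun a ha b hb γ ⟨haγ, hγb⟩ => by_contra fun hγ => ?_⟩
  obtain ⟨i₀, hi₀, hne⟩ : ∃ i < m, ofLex γ i ≠ ofLex α i := by
    by_contra! h
    exact hγ h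
  have hex : ∃ i, ofLex γ i ≠ ofLex α i := ⟨i₀, hne⟩
  -- compare at the first position where `γ` leaves `α`; there `a` and `b` still agree with `α`
  set i := Nat.find hex
  have hi : i < m := (Nat.find_min' hex hne).trans_lt hi₀
  have hbelow (j) (hj : j < i) : ofLex γ j = ofLex α j := by_contra (Nat.find_min hex hj)
  rcases (Nat.find_spec hex).lt_or_gt with hlt | hgt
  · refine haγ.not_gt (Finsupp.Lex.lt_iff.2 ⟨i, fun j hj => ?_, ?_⟩)
    · rw [hbelow j hj, ha j (hj.trans hi)]
    · rwa [ha i hi]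
  · refine hγb.not_gt (Finsupp.Lex.lt_iff.2 ⟨i, fun j hj => ?_, ?_⟩)
    · rw [hbelow j hj, hb j (hj.trans hi)]
    · rwa [hb i hi]

theorem exists_cylinder_subset_Ioi {u α : Lex (ℕ →₀ ℤ)} (h : u < α) :
    ∃ m, cylinder m α ⊆ Set.Ioi u := by
  obtain ⟨i, hagree, hi⟩ := Finsupp.Lex.lt_iff.1 h
  exact ⟨i + 1, fun γ hγ => Finsupp.Lex.lt_iff.2
    ⟨i, fun j hj => (hagree j hj).trans (hγ j (by omega)).symm, (hγ i (by omega)).symm ▸ hi⟩⟩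

theorem exists_cylinder_subset_Iio {v α : Lex (ℕ →₀ ℤ)} (h : α < v) :
    ∃ m, cylinder m α ⊆ Set.Iio v := by
  obtain ⟨i, hagree, hi⟩ := Finsupp.Lex.lt_iff.1 h
  exact ⟨i + 1, fun γ hγ => Finsupp.Lex.lt_iff.2
    ⟨i, fun j hj => (hγ j (by omega)).trans (hagree j hj), (hγ i (by omega)).symm ▸ hi⟩⟩

theorem exists_cylinder_subset_Ioo {u v α : Lex (ℕ →₀ ℤ)} (hu : u < α) (hv : α < v) :
    ∃ m, cylinder m α ⊆ Set.Ioo u v := by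
  obtain ⟨m₁, h₁⟩ := exists_cylinder_subset_Ioi hu
  obtain ⟨m₂, h₂⟩ := exists_cylinder_subset_Iio hv
  exact ⟨max m₁ m₂, fun γ hγ => ⟨h₁ (cylinder_antitone (le_max_left _ _) _ hγ),
    h₂ (cylinder_antitone (le_max_right _ _) _ hγ)⟩⟩

theorem Icc_subset_cylinder (m : ℕ) (α : Lex (ℕ →₀ ℤ)) :
    Set.Icc (α + toLex (single m (-1))) (α + toLex (single m 1)) ⊆ cylinder m α :=
  (cylinder_ordConnected m α).out (add_single_mem_cylinder m _ _) (add_single_mem_cylinder m _ _)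

theorem nhds_basis_cylinder {X : Type} [LinearOrder X] [TopologicalSpace X] [OrderTopology X]
    (e : X ≃o Lex (ℕ →₀ ℤ)) (x : X) :
    (𝓝 x).HasBasis (fun _ : ℕ => True) fun m => e ⁻¹' cylinder m (e x) := by
  have hlt (m : ℕ) : e x + toLex (single m (-1)) < e x ∧ e x < e x + toLex (single m 1) := by
    refine ⟨add_lt_of_neg_right _ ?_, lt_add_of_pos_right _ (Finsupp.Lex.toLex_single_one_pos m)⟩
    simpa [single_neg] using Finsupp.Lex.toLex_single_one_pos m
  refine (nhds_basis_Ioo' ⟨_, e.symm_apply_lt.2 (hlt 0).1⟩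
    ⟨_, e.lt_symm_apply.2 (hlt 0).2⟩).to_hasBasis (fun ⟨a, b⟩ ⟨ha, hb⟩ => ?_) fun m _ => ?_
  · obtain ⟨m, hm⟩ := exists_cylinder_subset_Ioo (e.lt_iff_lt.2 ha) (e.lt_iff_lt.2 hb)
    exact ⟨m, trivial, fun y hy => ⟨e.lt_iff_lt.1 (hm hy).1, e.lt_iff_lt.1 (hm hy).2⟩⟩
  · refine ⟨(e.symm (e x + toLex (single m (-1))), e.symm (e x + toLex (single m 1))),
      ⟨e.symm_apply_lt.2 (hlt m).1, e.lt_symm_apply.2 (hlt m).2⟩, fun y ⟨hy₁, hy₂⟩ => ?_⟩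
    exact Icc_subset_cylinder m (e x) ⟨(e.symm_apply_lt.1 hy₁).le, (e.lt_symm_apply.1 hy₂).le⟩

theorem nhdsNE_basis_cylinder {X : Type} [LinearOrder X] [TopologicalSpace X] [OrderTopology X]
    (e : X ≃o Lex (ℕ →₀ ℤ)) (x : X) :
    (𝓝[≠] x).HasBasis (fun _ : ℕ => True) fun m => e ⁻¹' cylinder m (e x) ∩ {x}ᶜ :=
  (nhds_basis_cylinder e x).inf_principal _

end LexCode

section Merge

/-- The alphabet of the trees: in an integer sequence, the entry `0` is a blank. -/
abbrev Letter : Type := {z : ℤ // z ≠ 0}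

instance : Infinite Letter := (Set.finite_singleton (0 : ℤ)).infinite_compl.to_subtype

def letter (z : ℤ) : Option Letter := if h : z = 0 then none else some ⟨z, h⟩

theorem letter_zero : letter 0 = none := rfl

theorem letter_coe (a : Letter) : letter a = some a := dif_neg a.2

def VanishesFrom (α : ℕ →₀ ℤ) (n : ℕ) : Prop := ∀ i, n ≤ i → α i = 0

theorem VanishesFrom.mono {α : ℕ →₀ ℤ} {n m : ℕ} (h : VanishesFrom α n) (hnm : n ≤ m) :
    VanishesFrom α m :=
  fun i hi => h i (hnm.trans hi)

def depth (α : ℕ →₀ ℤ) : ℕ := α.support.sup (· + 1)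

theorem vanishesFrom_depth (α : ℕ →₀ ℤ) : VanishesFrom α (depth α) := fun _ hi =>
  Finsupp.notMem_support_iff.1 fun hmem =>
    (Finset.le_sup (f := (· + 1)) hmem).not_gt (Nat.lt_succ_of_le hi)

def mergeBlock (α β : ℕ →₀ ℤ) (i : ℕ) : List (Letter ⊕ Letter) :=
  ((letter (α i)).map Sum.inl).toList ++ ((letter (β i)).map Sum.inr).toList

def mergeUpTo (α β : ℕ →₀ ℤ) (n : ℕ) : List (Letter ⊕ Letter) :=
  (List.range n).flatMap (mergeBlock α β)

/-- The word read off the interleaving `α 0, β 0, α 1, β 1, …` by deleting the blanks. -/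
def merge (α β : ℕ →₀ ℤ) : List (Letter ⊕ Letter) := mergeUpTo α β (depth α ⊔ depth β)

def segmentWord (α : ℕ →₀ ℤ) (n k : ℕ) : List Letter :=
  (List.range' n k).filterMap fun i => letter (α i)

variable {α α' β β' : ℕ →₀ ℤ} {n k : ℕ}

theorem mergeUpTo_add (α β : ℕ →₀ ℤ) (n k : ℕ) :
    mergeUpTo α β (n + k) = mergeUpTo α β n ++ (List.range' n k).flatMap (mergeBlock α β) := by
  rw [mergeUpTo, List.range_add, List.flatMap_append, List.range'_eq_map_range,
    List.flatMap_map]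
  rfl

theorem mergeUpTo_eq_of_le {N : ℕ} (h : n ≤ N) (hα : VanishesFrom α n) (hβ : VanishesFrom β n) :
    mergeUpTo α β N = mergeUpTo α β n := by
  obtain ⟨k, rfl⟩ := Nat.exists_eq_add_of_le h
  rw [mergeUpTo_add, List.flatMap_eq_nil_iff.2 fun i hi => ?_, List.append_nil]
  have hni := (List.mem_range'_1.1 hi).1
  simp [mergeBlock, hα i hni, hβ i hni, letter_zero]

theorem merge_eq_mergeUpTo (hα : VanishesFrom α n) (hβ : VanishesFrom β n) :
    merge α β = mergeUpTo α β n := by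
  rw [merge, ← mergeUpTo_eq_of_le (le_max_left _ n)
    ((vanishesFrom_depth α).mono le_sup_left) ((vanishesFrom_depth β).mono le_sup_right),
    mergeUpTo_eq_of_le (le_max_right _ n) hα hβ]

theorem merge_eq_append_left (hα : VanishesFrom α n) (hβ : VanishesFrom β n)
    (hα' : VanishesFrom α' (n + k)) (hagree : ∀ i < n, α' i = α i) :
    merge α' β = merge α β ++ (segmentWord α' n k).map Sum.inl := by
  rw [merge_eq_mergeUpTo hα' (hβ.mono (Nat.le_add_right n k)), merge_eq_mergeUpTo hα hβ,
    mergeUpTo_add, segmentWord, List.filterMap_eq_flatMap_toList, List.map_flatMap]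
  congr 1
  · exact List.flatMap_congr fun i hi => by simp [mergeBlock, hagree i (List.mem_range.1 hi)]
  · refine List.flatMap_congr fun i hi => ?_
    simp [mergeBlock, hβ i (List.mem_range'_1.1 hi).1, letter_zero, Option.toList_map]

theorem merge_eq_append_right (hα : VanishesFrom α n) (hβ : VanishesFrom β n)
    (hβ' : VanishesFrom β' (n + k)) (hagree : ∀ i < n, β' i = β i) :
    merge α β' = merge α β ++ (segmentWord β' n k).map Sum.inr := by
  rw [merge_eq_mergeUpTo (hα.mono (Nat.le_add_right n k)) hβ', merge_eq_mergeUpTo hα hβ,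
    mergeUpTo_add, segmentWord, List.filterMap_eq_flatMap_toList, List.map_flatMap]
  congr 1
  · exact List.flatMap_congr fun i hi => by simp [mergeBlock, hagree i (List.mem_range.1 hi)]
  · refine List.flatMap_congr fun i hi => ?_
    simp [mergeBlock, hα i (List.mem_range'_1.1 hi).1, letter_zero, Option.toList_map]

theorem segmentWord_eq_nil (hα : VanishesFrom α n) : segmentWord α n k = [] :=
  List.filterMap_eq_nil_iff.2 fun i hi => by rw [hα i (List.mem_range'_1.1 hi).1, letter_zero]

theorem segmentWord_ne_nil (hα : VanishesFrom α n) (hα' : VanishesFrom α' (n + k))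
    (hagree : ∀ i < n, α' i = α i) (hne : α' ≠ α) : segmentWord α' n k ≠ [] := by
  obtain ⟨i, hi⟩ := DFunLike.ne_iff.1 hne
  have hni : n ≤ i := not_lt.1 fun h => hi (hagree i h)
  have hi' : α' i ≠ 0 := by rwa [hα i hni] at hi
  have hik : i < n + k := not_le.1 fun h => hi' (hα' i h)
  rw [segmentWord, Ne, List.filterMap_eq_nil_iff]
  exact fun h => by simpa [letter, hi'] using h i (List.mem_range'_1.2 ⟨hni, hik⟩)

theorem exists_segmentWord_eq (hα : VanishesFrom α n) (w : List Letter) :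
    ∃ α', (∀ i < n, α' i = α i) ∧ VanishesFrom α' (n + w.length) ∧
      segmentWord α' n w.length = w := by
  classical
  induction w generalizing n with
  | nil => exact ⟨α, fun _ _ => rfl, hα, segmentWord_eq_nil hα⟩
  | cons a w ih =>
    obtain ⟨α₁, hagree, hvan, hseg⟩ := ih (hα.mono n.le_succ)
    refine ⟨α₁.update n a, fun i hi => ?_, fun i hi => ?_, ?_⟩
    · rw [Finsupp.coe_update, Function.update_of_ne hi.ne, hagree i (by omega)]
    · rw [Finsupp.coe_update, Function.update_of_ne (by simp at hi; omega)]
      exact hvan i (by simp at hi; omega)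
    · rw [List.length_cons, segmentWord, List.range'_succ, List.filterMap_cons_some
        (by rw [Finsupp.coe_update, Function.update_self, letter_coe])]
      refine congrArg (a :: ·) (Eq.trans (List.filterMap_congr fun i hi => ?_) hseg)
      rw [Finsupp.coe_update, Function.update_of_ne (by simp [List.mem_range'_1] at hi; omega)]

end Merge

section MergeMap

open Filter Topology

variable {X : Type} [LinearOrder X] [TopologicalSpace X] [OrderTopology X]
  (e : X ≃o Lex (ℕ →₀ ℤ))

noncomputable def mergeMap (p : X × X) : List (Letter ⊕ Letter) :=
  merge (ofLex (e p.1)) (ofLex (e p.2))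

theorem subset_mergeMap_image_of_mem_prodTau1 {p : X × X} {U : Set (X × X)}
    (hU : U ∈ prodTau1 (fun x => 𝓝[≠] x) p) :
    {v | prodRel1 Letter Letter .itr (mergeMap e p) v} ⊆ mergeMap e '' U := by
  obtain ⟨x, y⟩ := p
  rintro _ ⟨w, hw, rfl⟩
  obtain ⟨m, -, hm⟩ := (nhdsNE_basis_cylinder e x).mem_iff.1 (mem_map.1 hU)
  set n := max m (depth (ofLex (e x)) ⊔ depth (ofLex (e y)))
  have hα : VanishesFrom (ofLex (e x)) n := (vanishesFrom_depth _).mono (by simp [n])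
  have hβ : VanishesFrom (ofLex (e y)) n := (vanishesFrom_depth _).mono (by simp [n])
  obtain ⟨α', hagree, hvan, hseg⟩ := exists_segmentWord_eq hα w
  have hne : toLex α' ≠ e x := fun h => transGen_sucRel_nil_iff.1 hw
    (hseg ▸ (congrArg ofLex h ▸ segmentWord_eq_nil hα :))
  refine ⟨(e.symm (toLex α'), y), hm ⟨fun i hi => ?_, fun h => hne (e.symm_apply_eq.1 h)⟩, ?_⟩
  · simpa using hagree i (hi.trans_le (le_max_left _ _))
  · simp only [mergeMap, OrderIso.apply_symm_apply, ofLex_toLex]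
    rw [merge_eq_append_left hα hβ hvan hagree, hseg]

theorem subset_mergeMap_image_of_mem_prodTau2 {p : X × X} {U : Set (X × X)}
    (hU : U ∈ prodTau2 (fun x => 𝓝[≠] x) p) :
    {v | prodRel2 Letter Letter .itr (mergeMap e p) v} ⊆ mergeMap e '' U := by
  obtain ⟨x, y⟩ := p
  rintro _ ⟨w, hw, rfl⟩
  obtain ⟨m, -, hm⟩ := (nhdsNE_basis_cylinder e y).mem_iff.1 (mem_map.1 hU)
  set n := max m (depth (ofLex (e x)) ⊔ depth (ofLex (e y)))
  have hα : VanishesFrom (ofLex (e x)) n := (vanishesFrom_depth _).mono (by simp [n])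
  have hβ : VanishesFrom (ofLex (e y)) n := (vanishesFrom_depth _).mono (by simp [n])
  obtain ⟨β', hagree, hvan, hseg⟩ := exists_segmentWord_eq hβ w
  have hne : toLex β' ≠ e y := fun h => transGen_sucRel_nil_iff.1 hw
    (hseg ▸ (congrArg ofLex h ▸ segmentWord_eq_nil hβ :))
  refine ⟨(x, e.symm (toLex β')), hm ⟨fun i hi => ?_, fun h => hne (e.symm_apply_eq.1 h)⟩, ?_⟩
  · simpa using hagree i (hi.trans_le (le_max_left _ _))
  · simp only [mergeMap, OrderIso.apply_symm_apply, ofLex_toLex]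
    rw [merge_eq_append_right hα hβ hvan hagree, hseg]

theorem exists_mem_prodTau1_mergeMap_image_subset (p : X × X) :
    ∃ U ∈ prodTau1 (fun x => 𝓝[≠] x) p,
      mergeMap e '' U ⊆ {v | prodRel1 Letter Letter .itr (mergeMap e p) v} := by
  obtain ⟨x, y⟩ := p
  set n := depth (ofLex (e x)) ⊔ depth (ofLex (e y))
  have hα : VanishesFrom (ofLex (e x)) n := (vanishesFrom_depth _).mono le_sup_left
  have hβ : VanishesFrom (ofLex (e y)) n := (vanishesFrom_depth _).mono le_sup_right
  refine ⟨(fun a => (a, y)) '' (e ⁻¹' cylinder n (e x) ∩ {x}ᶜ),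
    image_mem_map ((nhdsNE_basis_cylinder e x).mem_of_mem trivial), ?_⟩
  rintro _ ⟨_, ⟨x', ⟨hcyl, hx'⟩, rfl⟩, rfl⟩
  have hvan := (vanishesFrom_depth (ofLex (e x'))).mono (Nat.le_add_left _ n)
  refine ⟨_, transGen_sucRel_nil_iff.2 (segmentWord_ne_nil hα hvan hcyl fun h => hx' ?_),
    merge_eq_append_left hα hβ hvan hcyl⟩
  exact e.injective (ofLex_inj.1 h)

theorem exists_mem_prodTau2_mergeMap_image_subset (p : X × X) :
    ∃ U ∈ prodTau2 (fun x => 𝓝[≠] x) p,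
      mergeMap e '' U ⊆ {v | prodRel2 Letter Letter .itr (mergeMap e p) v} := by
  obtain ⟨x, y⟩ := p
  set n := depth (ofLex (e x)) ⊔ depth (ofLex (e y))
  have hα : VanishesFrom (ofLex (e x)) n := (vanishesFrom_depth _).mono le_sup_left
  have hβ : VanishesFrom (ofLex (e y)) n := (vanishesFrom_depth _).mono le_sup_right
  refine ⟨(fun b => (x, b)) '' (e ⁻¹' cylinder n (e y) ∩ {y}ᶜ),
    image_mem_map ((nhdsNE_basis_cylinder e y).mem_of_mem trivial), ?_⟩
  rintro _ ⟨_, ⟨y', ⟨hcyl, hy'⟩, rfl⟩, rfl⟩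
  have hvan := (vanishesFrom_depth (ofLex (e y'))).mono (Nat.le_add_left _ n)
  refine ⟨_, transGen_sucRel_nil_iff.2 (segmentWord_ne_nil hβ hvan hcyl fun h => hy' ?_),
    merge_eq_append_right hα hβ hvan hcyl⟩
  exact e.injective (ofLex_inj.1 h)

theorem isNdMorphism_mergeMap :
    IsNdMorphism ![prodTau1 (fun x : X => 𝓝[≠] x), prodTau2 (fun x : X => 𝓝[≠] x)]
      (fun i => nOfK ((![prodRel1 Letter Letter .itr, prodRel2 Letter Letter .itr] :
        Fin 2 → _) i)) (mergeMap e) := by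
  have forth (i : Fin 2) (p : X × X) :
      ∀ U ∈ (![prodTau1 (fun x : X => 𝓝[≠] x), prodTau2 (fun x : X => 𝓝[≠] x)] : Fin 2 → _) i p,
        {v | (![prodRel1 Letter Letter .itr, prodRel2 Letter Letter .itr] : Fin 2 → _) i
          (mergeMap e p) v} ⊆ mergeMap e '' U := by
    fin_cases i
    exacts [fun U => subset_mergeMap_image_of_mem_prodTau1 e,
      fun U => subset_mergeMap_image_of_mem_prodTau2 e]
  refine ⟨fun w => ?_, fun i p => ⟨fun U hU => mem_principal.2 (forth i p U hU), fun V hV => ?_⟩⟩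
  · -- the origin goes to the empty word, and the tree is generated from it by single steps
    induction w using List.reverseRecOn with
    | nil =>
      refine ⟨(e.symm 0, e.symm 0), ?_⟩
      simpa [mergeMap, mergeUpTo] using
        merge_eq_mergeUpTo (n := 0) (fun _ _ => rfl) (fun _ _ => rfl)
    | append_singleton w c ih =>
      obtain ⟨p, rfl⟩ := ih
      rcases c with a | a
      · obtain ⟨q, -, hq⟩ := forth 0 p _ univ_mem ⟨[a], .single ⟨a, rfl⟩, rfl⟩
        exact ⟨q, hq⟩
      · obtain ⟨q, -, hq⟩ := forth 1 p _ univ_mem ⟨[a], .single ⟨a, rfl⟩, rfl⟩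
        exact ⟨q, hq⟩
  · obtain ⟨U, hU, hsub⟩ : ∃ U ∈ (![prodTau1 (fun x : X => 𝓝[≠] x),
        prodTau2 (fun x : X => 𝓝[≠] x)] : Fin 2 → _) i p, mergeMap e '' U ⊆
        {v | (![prodRel1 Letter Letter .itr, prodRel2 Letter Letter .itr] : Fin 2 → _) i
          (mergeMap e p) v} := by
      fin_cases i
      exacts [exists_mem_prodTau1_mergeMap_image_subset e p,
        exists_mem_prodTau2_mergeMap_image_subset e p]
    exact ⟨U, hU, hsub.trans (mem_principal.1 hV)⟩

end MergeMap

/-- For `𝔛 = (ℚ, τ)` with `τ(x)` the punctured neighborhood filter of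
`x` in the standard topology on `ℚ`: `Log(𝔛 × 𝔛) = D4 ⊗ D4`. -/
theorem log_rat_prod_eq_D4_fusion :
    NLog2 (prodTau1 (fun x : ℚ => nhdsWithin x {x}ᶜ))
      (prodTau2 (fun x : ℚ => nhdsWithin x {x}ᶜ))
      = Fusion LogicD4 LogicD4 := by
  refine Set.Subset.antisymm ?_
    (fusion_subset_nLog2 logicD4_subset_nLog_nhdsNE logicD4_subset_nLog_nhdsNE)
  obtain ⟨e⟩ := Order.iso_of_countable_dense ℚ (Lex (ℕ →₀ ℤ))
  calc NLog2 (prodTau1 (fun x : ℚ => nhdsWithin x {x}ᶜ))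
        (prodTau2 (fun x : ℚ => nhdsWithin x {x}ᶜ))
      ⊆ NLogn fun i => nOfK ((![prodRel1 Letter Letter .itr, prodRel2 Letter Letter .itr] :
          Fin 2 → _) i) := (isNdMorphism_mergeMap e).nLogn_subset
    _ = KLog2 (prodRel1 Letter Letter .itr) (prodRel2 Letter Letter .itr) := nLogn_nOfK _
    _ ⊆ Fusion LogicD4 LogicD4 := kLog2_treeProd_subset_fusion_D4 Letter
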